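/- arXiv:1612.09068 — 7 statements merged into one kernel-verified Lean document; each statement's English description precedes it below -/
import Mathlib

section
/- Let N be a left near-ring. Then N admits a multiplicative derivation only if N is zero symmetric, i.e., if d : N → N satisfies d(xy) = x·d(y) + d(x)·y for all x, y ∈ N, then 0·x = 0 for all x ∈ N. -/
/-! Every product `b = 0 * x` is left-absorbing, so the Leibniz rule at `(0, b)` gives
`d b = 0 * d b + b`. Multiplying this on the left by `0` yields `0 * d b = 0 * d b + b`,
hence `b = 0`. -/

class LeftNearRing (N : Type*) extends AddGroup N, Mul N where
  mul_assoc : ∀ a b c : N, a * b * c = a * (b * c)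
  left_distrib : ∀ a b c : N, a * (b + c) = a * b + a * c

namespace LeftNearRing

variable {N : Type*} [LeftNearRing N]

theorem mul_zero (a : N) : a * 0 = 0 :=
  left_eq_add.mp (by rw [← left_distrib, add_zero] : a * 0 = a * 0 + a * 0)

theorem mul_zero_mul (a x : N) : a * (0 * x) = 0 * x := by
  rw [← mul_assoc, mul_zero]

theorem eq_zero_of_eq_zero_mul_add {b c : N} (hb : 0 * b = b) (hc : c = 0 * c + b) :
    b = 0 := by
  have h : 0 * c = 0 * c + b := by
    conv_lhs => rw [hc]
    rw [left_distrib, mul_zero_mul, hb]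
  exact left_eq_add.mp h

theorem derivation_zero_mul {d : N → N} (hd : ∀ x y : N, d (x * y) = x * d y + d x * y)
    (x : N) : d (0 * x) = 0 * d (0 * x) + 0 * x := by
  simpa only [mul_zero_mul] using hd 0 (0 * x)

end LeftNearRing

theorem stmt0 {N : Type*} [LeftNearRing N] (d : N → N)
    (hd : ∀ x y : N, d (x * y) = x * d y + d x * y) :
    ∀ x : N, 0 * x = 0 := fun x =>
  LeftNearRing.eq_zero_of_eq_zero_mul_add (LeftNearRing.mul_zero_mul 0 x)
    (LeftNearRing.derivation_zero_mul hd x)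
end

section
/- Let N be a left near-ring and d a multiplicative derivation of N. Then (x·d(y) + d(x)·y)·z = x·d(y)·z + d(x)·y·z for all x, y, z ∈ N. -/
namespace LeftNearRing

instance toSemigroup (N : Type*) [LeftNearRing N] : Semigroup N where
  mul_assoc := LeftNearRing.mul_assoc

instance toLeftDistribClass (N : Type*) [LeftNearRing N] : LeftDistribClass N where
  left_distrib := LeftNearRing.left_distrib

end LeftNearRing

theorem stmt1 {N : Type*} [LeftNearRing N] (d : N → N)
    (hd : ∀ x y : N, d (x * y) = x * d y + d x * y) :
    ∀ x y z : N, (x * d y + d x * y) * z = x * d y * z + d x * y * z := by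
  intro x y z
  apply add_left_cancel (a := x * y * d z)
  calc x * y * d z + (x * d y + d x * y) * z
      = d (x * y * z) := by rw [hd, hd]
    _ = d (x * (y * z)) := by rw [mul_assoc]
    _ = x * y * d z + (x * d y * z + d x * y * z) := by
      rw [hd, hd, mul_add, add_assoc]
      simp only [← mul_assoc]
end

section
/- Let N be a 3-prime zero-symmetric left near-ring and d a nonzero multiplicative derivation of N. If a ∈ N satisfies a·d(x) = 0 for all x ∈ N, then a = 0. -/
/-- Expanding `a * d (n * y) = 0` by the Leibniz rule, the term `a * (d n * y) = (a * d n) * y`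
vanishes by zero symmetry, leaving `a * n * d y = 0`. -/
theorem LeftNearRing.mul_mul_apply_eq_zero_of_mul_apply_eq_zero {N : Type*} [LeftNearRing N]
    (hzs : ∀ x : N, 0 * x = 0) {d : N → N} (hd : ∀ x y : N, d (x * y) = x * d y + d x * y)
    {a : N} (ha : ∀ x : N, a * d x = 0) (n y : N) : a * n * d y = 0 := by
  have hleibniz : a * (n * d y) + a * (d n * y) = 0 := by
    rw [← LeftNearRing.left_distrib, ← hd, ha]
  have hzero : a * (d n * y) = 0 := by
    rw [← LeftNearRing.mul_assoc, ha, hzs]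
  rwa [hzero, add_zero, ← LeftNearRing.mul_assoc] at hleibniz

theorem stmt4 {N : Type*} [LeftNearRing N]
    (hzs : ∀ x : N, 0 * x = 0)
    (hp : ∀ a b : N, (∀ n : N, a * n * b = 0) → a = 0 ∨ b = 0)
    (d : N → N) (hd : ∀ x y : N, d (x * y) = x * d y + d x * y)
    (hd0 : ∃ x : N, d x ≠ 0)
    (a : N) (ha : ∀ x : N, a * d x = 0) : a = 0 := by
  obtain ⟨y, hy⟩ := hd0
  have hprime := hp a (d y) fun n ↦
    LeftNearRing.mul_mul_apply_eq_zero_of_mul_apply_eq_zero hzs hd ha n y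
  exact hprime.resolve_right hy
end

section
/- Let N be a 3-prime zero-symmetric left near-ring and d a multiplicative derivation of N such that d(xy) = d(x)·d(y) for all x, y ∈ N. Then d = 0. -/
namespace LeftNearRing

variable {N : Type*} [LeftNearRing N]

theorem mul_neg (a b : N) : a * -b = -(a * b) :=
  eq_neg_of_add_eq_zero_right <| by rw [← left_distrib, add_neg_cancel, mul_zero]

theorem mul_sub (a b c : N) : a * (b - c) = a * b - a * c := by
  rw [sub_eq_add_neg, left_distrib, mul_neg, ← sub_eq_add_neg]

section MultiplicativeDerivation

variable {d : N → N} (hd : ∀ x y : N, d (x * y) = x * d y + d x * y)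
  (hh : ∀ x y : N, d (x * y) = d x * d y)
include hd hh

theorem mul_sub_eq_of_derivation_of_mul (x y : N) : d x * (d y - y) = x * d y := by
  rw [mul_sub, ← hh, hd, add_sub_cancel_right]

theorem mul_mul_eq_of_derivation_of_mul (x n y : N) : d x * n * d y = x * n * d y := by
  have h := mul_sub_eq_of_derivation_of_mul hd hh (x * n) y
  rw [hh, mul_assoc, mul_sub_eq_of_derivation_of_mul hd hh n y, ← mul_assoc] at h
  rw [h, mul_assoc]

theorem mul_mul_eq_zero_of_derivation_of_mul (x y w : N) : d x * y * w = 0 := by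
  have h := mul_sub_eq_of_derivation_of_mul hd hh x (y * w)
  rw [hh, mul_sub, ← mul_assoc, mul_mul_eq_of_derivation_of_mul hd hh x (d y) w, mul_assoc x,
    sub_eq_self] at h
  rwa [mul_assoc]

end MultiplicativeDerivation

end LeftNearRing

theorem stmt6_general {N : Type*} [LeftNearRing N] (hN : ∃ x : N, x ≠ 0)
    (hp : ∀ a b : N, (∀ n : N, a * n * b = 0) → a = 0 ∨ b = 0)
    (d : N → N) (hd : ∀ x y : N, d (x * y) = x * d y + d x * y)
    (hh : ∀ x y : N, d (x * y) = d x * d y) :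
    ∀ x : N, d x = 0 := by
  intro x
  obtain ⟨w, hw⟩ := hN
  exact (hp (d x) w fun n ↦
    LeftNearRing.mul_mul_eq_zero_of_derivation_of_mul hd hh x n w).resolve_right hw

theorem stmt6 {N : Type*} [LeftNearRing N] (hN : ∃ x : N, x ≠ 0)
    (hzs : ∀ x : N, 0 * x = 0)
    (hp : ∀ a b : N, (∀ n : N, a * n * b = 0) → a = 0 ∨ b = 0)
    (d : N → N) (hd : ∀ x y : N, d (x * y) = x * d y + d x * y)
    (hh : ∀ x y : N, d (x * y) = d x * d y) :
    ∀ x : N, d x = 0 :=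
  stmt6_general hN hp d hd hh
end

section
/- Let N be a 3-prime left near-ring, z ∈ Z with z ≠ 0, and x ∈ N such that xz ∈ Z. Then x ∈ Z, where Z is the multiplicative center. -/
theorem stmt13 {N : Type*} [LeftNearRing N]
    (hp : ∀ a b : N, (∀ n : N, a * n * b = 0) → a = 0 ∨ b = 0)
    (z : N) (hz : ∀ u : N, z * u = u * z) (hz0 : z ≠ 0)
    (x : N) (hxz : ∀ u : N, (x * z) * u = u * (x * z)) :
    ∀ u : N, x * u = u * x := by
  have ma := LeftNearRing.mul_assoc (N := N)
  have ld := LeftNearRing.left_distrib (N := N)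
  have mz : ∀ a : N, a * (0 : N) = 0 := by
    intro a
    have h := ld a 0 0
    rw [add_zero] at h
    exact right_eq_add.mp h
  have mn : ∀ a b : N, a * (-b) = -(a * b) := by
    intro a b
    have h : a * b + a * (-b) = 0 := by rw [← ld, add_neg_cancel, mz]
    exact (neg_eq_of_add_eq_zero_right h).symm
  -- key : z * (x*u - u*x) = 0
  have key : ∀ u : N, z * (x * u - u * x) = 0 := by
    intro u
    have h1 : z * (x * u) = u * (x * z) := by
      rw [← ma, hz x]; exact hxz u
    have h2 : z * (u * x) = u * (x * z) := by
      rw [← ma, hz u, ma u z x, hz x]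
    rw [sub_eq_add_neg, ld, mn, h1, h2, add_neg_cancel]
  intro u
  have hn : ∀ n : N, z * n * (x * u - u * x) = 0 := by
    intro n
    rw [hz n, ma, key, mz]
  rcases hp z (x * u - u * x) hn with h | h
  · exact absurd h hz0
  · exact sub_eq_zero.mp h
end

section
/- Let N be a left near-ring and d a multiplicative derivation of N satisfying d(xy) = d(x)·d(y) for all x, y ∈ N. Then d(x)·y·z = d(x)·y·d(z) for all x, y, z ∈ N. -/
namespace LeftNearRing

variable {N : Type*} [LeftNearRing N] {d : N → N}

theorem map_mul_mul_of_leibniz (hd : ∀ x y : N, d (x * y) = x * d y + d x * y) (a b c : N) :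
    d (a * b) * c = a * (d b * c) + d a * (b * c) := by
  have h : d (a * b * c) = d (a * (b * c)) := by rw [mul_assoc]
  rw [hd (a * b) c, hd a (b * c), hd b c, left_distrib, mul_assoc, add_assoc] at h
  exact add_left_cancel h

theorem mul_mul_map_of_leibniz_of_map_mul (hd : ∀ x y : N, d (x * y) = x * d y + d x * y)
    (hh : ∀ x y : N, d (x * y) = d x * d y) (x y z : N) :
    d x * (y * d z) = d x * (y * z) := by
  have h : x * d (y * z) + d x * (y * d z) = x * d (y * z) + d x * (y * z) :=
    calc x * d (y * z) + d x * (y * d z)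
        = d (x * y) * d z := by rw [map_mul_mul_of_leibniz hd, hh y z]
      _ = d x * d (y * z) := by rw [hh, hh, mul_assoc]
      _ = x * d (y * z) + d x * (y * z) := by rw [← hh, hd]
  exact add_left_cancel h

end LeftNearRing

theorem stmt15 {N : Type*} [LeftNearRing N]
    (d : N → N) (hd : ∀ x y : N, d (x * y) = x * d y + d x * y)
    (hh : ∀ x y : N, d (x * y) = d x * d y) :
    ∀ x y z : N, d x * y * z = d x * y * d z := by
  intro x y z
  rw [LeftNearRing.mul_assoc, LeftNearRing.mul_assoc,
    LeftNearRing.mul_mul_map_of_leibniz_of_map_mul hd hh]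
end

section
/- Let N be a left near-ring and d a multiplicative derivation of N satisfying d(xy) = d(y)·d(x) for all x, y ∈ N. Then d(x)·x·y = d(x)·y·d(x) for all x, y ∈ N. -/
namespace LeftNearRing

variable {N : Type*} [LeftNearRing N] {d : N → N}

theorem derivation_mul_mul_right (hd : ∀ x y : N, d (x * y) = x * d y + d x * y) (a b c : N) :
    d (a * b) * c = a * d b * c + d a * b * c := by
  have expand_inner : d (a * (b * c)) = a * b * d c + (a * d b * c + d a * b * c) := by
    rw [hd a (b * c), hd b c, left_distrib, mul_assoc, mul_assoc, mul_assoc, add_assoc]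
  have expand_outer : d (a * (b * c)) = a * b * d c + d (a * b) * c := by
    rw [← mul_assoc, hd (a * b) c]
  exact add_left_cancel (expand_outer.symm.trans expand_inner)

end LeftNearRing

theorem stmt17 {N : Type*} [LeftNearRing N]
    (d : N → N) (hd : ∀ x y : N, d (x * y) = x * d y + d x * y)
    (hh : ∀ x y : N, d (x * y) = d y * d x) :
    ∀ x y : N, d x * x * y = d x * y * d x := by
  intro x y
  have via_derivation : d (x * (x * y)) = x * d y * d x + d x * x * y := by
    rw [hd x (x * y), hh x y, ← LeftNearRing.mul_assoc, LeftNearRing.mul_assoc (d x) x y]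
  have via_antihom : d (x * (x * y)) = x * d y * d x + d x * y * d x := by
    rw [hh x (x * y), LeftNearRing.derivation_mul_mul_right hd x y (d x)]
  exact add_left_cancel (via_derivation.symm.trans via_antihom)
end
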